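/- arXiv:2009.13857 — 3 statements merged into one kernel-verified Lean document; each statement's English description precedes it below -/
import Mathlib

section
/- Let n ≥ 1 and consider finitely many indices i = 1,…,n. For each i let a_i ∈ ℝ and q_i ∈ ℝ with q_i > 0, and let α ∈ ℝ satisfy |a_i| < α for every i. Define the robustness margin R̄ = min_{i=1,…,n} (α + a_i)/q_i. Then R̄ > 0, and for every δ ≥ 0 the following equivalence holds: max_{i=1,…,n} |a_i − δ·q_i| < α if and only if δ < R̄. (Equivalently: there exists an index i with |a_i − δ·q_i| ≥ α if and only if δ ≥ R̄.) -/
open Finset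

theorem lt_univ_inf'_iff {ι β : Type*} [Fintype ι] [LinearOrder β] (H : (univ : Finset ι).Nonempty)
    (f : ι → β) (b : β) : b < univ.inf' H f ↔ ∀ i, b < f i := by
  simp only [lt_inf'_iff, mem_univ, forall_const]

/-- Only the lower bound `-α < a - δ q` can fail as `δ ≥ 0` grows, since `a - δ q ≤ a < α`. -/
theorem abs_sub_mul_lt_iff_lt_div {a q α δ : ℝ} (hq : 0 < q) (hδ : 0 ≤ δ) (ha : a < α) :
    |a - δ * q| < α ↔ δ < (α + a) / q := by
  have hδq : 0 ≤ δ * q := mul_nonneg hδ hq.le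
  rw [abs_lt, lt_div_iff₀ hq]
  constructor
  · rintro ⟨hlower, -⟩
    linarith
  · intro h
    constructor <;> linarith

/-- robustness margin characterization. -/
theorem stmt0 (n : ℕ) (hn : 0 < n) (a q : Fin n → ℝ) (hq : ∀ i, 0 < q i)
    (α : ℝ) (ha : ∀ i, |a i| < α) :
    0 < Finset.univ.inf' ⟨⟨0, hn⟩, Finset.mem_univ _⟩ (fun i => (α + a i) / q i) ∧
    ∀ δ : ℝ, 0 ≤ δ →
      (((∀ i, |a i - δ * q i| < α) ↔
          δ < Finset.univ.inf' ⟨⟨0, hn⟩, Finset.mem_univ _⟩ (fun i => (α + a i) / q i)) ∧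
        ((∃ i, α ≤ |a i - δ * q i|) ↔
          Finset.univ.inf' ⟨⟨0, hn⟩, Finset.mem_univ _⟩ (fun i => (α + a i) / q i) ≤ δ)) := by
  have hwithin : ∀ δ : ℝ, 0 ≤ δ → ((∀ i, |a i - δ * q i| < α) ↔
      δ < Finset.univ.inf' ⟨⟨0, hn⟩, Finset.mem_univ _⟩ (fun i => (α + a i) / q i)) := by
    intro δ hδ
    refine Iff.trans ?_ (lt_univ_inf'_iff _ _ _).symm
    exact forall_congr' fun i => abs_sub_mul_lt_iff_lt_div (hq i) hδ (abs_lt.mp (ha i)).2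
  -- `0 < R̄` is the case `δ = 0` of the equivalence.
  refine ⟨(hwithin 0 le_rfl).mp fun i => by simpa using ha i, fun δ hδ => ⟨hwithin δ hδ, ?_⟩⟩
  rw [← not_lt, ← hwithin δ hδ, not_forall]
  simp only [not_lt]
end

section
/- Let S be a finite nonempty set and u : S → ℝ, let M = max_{k∈S} u(k) and B = {k ∈ S : u(k) = M}. For ε ∈ (0,1) and s ∈ S define P_ε(s) = ε^{−u(s)} / Σ_{k∈S} ε^{−u(k)} (real powers). Then for every s ∈ S, the limit as ε → 0⁺ of P_ε(s) / ε^{M − u(s)} exists and equals 1/|B|; in particular this limit is finite and strictly positive. -/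
open scoped Classical in
/-- with `P_ε(s) = ε^{−u(s)} / ∑_k ε^{−u(k)}`, the ratio
`P_ε(s) / ε^{M − u(s)}` tends, as `ε → 0⁺` in `(0,1)`, to `1/|B|`, which is finite
and strictly positive. -/
theorem stmt11 (S : Type*) [Fintype S] [Nonempty S] (u : S → ℝ) (s : S) :
    Filter.Tendsto
      (fun ε : ℝ => (ε ^ (-(u s)) / ∑ k, ε ^ (-(u k))) /
        ε ^ (Finset.univ.sup' Finset.univ_nonempty u - u s))
      (nhdsWithin 0 (Set.Ioo (0 : ℝ) 1))
      (nhds (1 / ((Finset.univ.filter fun k =>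
        u k = Finset.univ.sup' Finset.univ_nonempty u).card : ℝ))) ∧
    0 < 1 / ((Finset.univ.filter fun k =>
        u k = Finset.univ.sup' Finset.univ_nonempty u).card : ℝ) := by
  set M := Finset.univ.sup' Finset.univ_nonempty u with hM
  have hB : ((Finset.univ.filter fun k => u k = M)).Nonempty := by
    obtain ⟨k, _, hk⟩ := Finset.exists_mem_eq_sup' Finset.univ_nonempty u
    exact ⟨k, Finset.mem_filter.2 ⟨Finset.mem_univ k, hk.symm⟩⟩
  have hcard : (0:ℝ) < ((Finset.univ.filter fun k => u k = M).card : ℝ) := by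
    exact_mod_cast Finset.card_pos.2 hB
  refine ⟨?_, by positivity⟩
  have key : ∀ ε ∈ Set.Ioo (0:ℝ) 1,
      (ε ^ (-(u s)) / ∑ k, ε ^ (-(u k))) / ε ^ (M - u s)
        = 1 / ∑ k, ε ^ (M - u k) := by
    intro ε hε
    have hε0 : 0 < ε := hε.1
    have hsum : ∑ k, ε ^ (M - u k) = ε ^ M * ∑ k, ε ^ (-(u k)) := by
      rw [Finset.mul_sum]
      refine Finset.sum_congr rfl fun k _ => ?_
      rw [← Real.rpow_add hε0]
      ring_nf
    have hpos : 0 < ∑ k : S, ε ^ (-(u k)) :=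
      Finset.sum_pos (fun k _ => Real.rpow_pos_of_pos hε0 _) Finset.univ_nonempty
    have hM0 : (0:ℝ) < ε ^ M := Real.rpow_pos_of_pos hε0 _
    have hs0 : (0:ℝ) < ε ^ (-(u s)) := Real.rpow_pos_of_pos hε0 _
    rw [hsum, Real.rpow_sub hε0, Real.rpow_neg hε0.le (u s)]
    rw [Real.rpow_neg hε0.le (u s)] at hs0
    field_simp
  have hsumlim : Filter.Tendsto (fun ε : ℝ => ∑ k, ε ^ (M - u k))
      (nhdsWithin 0 (Set.Ioo (0:ℝ) 1))
      (nhds ((Finset.univ.filter fun k => u k = M).card : ℝ)) := by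
    have hcardsum : ((Finset.univ.filter fun k => u k = M).card : ℝ)
        = ∑ k : S, (if u k = M then (1:ℝ) else 0) := by
      rw [Finset.sum_boole]
    rw [hcardsum]
    refine Filter.Tendsto.congr (fun ε => rfl) (tendsto_finset_sum _ fun k _ => ?_)
    by_cases hk : u k = M
    · simp only [hk, if_pos, sub_self]
      simpa using tendsto_const_nhds.congr (fun ε : ℝ => (Real.rpow_zero ε).symm)
    · have hlt : 0 < M - u k := by
        have : u k ≤ M := Finset.le_sup' u (Finset.mem_univ k)
        cases lt_or_eq_of_le this with
        | inl h => linarith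
        | inr h => exact absurd h hk
      simp only [hk, if_neg]
      have h0 : (0:ℝ) ^ (M - u k) = 0 := Real.zero_rpow (ne_of_gt hlt)
      have := (Real.continuousAt_rpow_const 0 (M - u k) (Or.inr hlt.le)).continuousWithinAt
        (s := Set.Ioo (0:ℝ) 1)
      simpa [ContinuousWithinAt, h0] using this
  have hne : ((Finset.univ.filter fun k => u k = M).card : ℝ) ≠ 0 := ne_of_gt hcard
  have hdiv : Filter.Tendsto (fun ε : ℝ => 1 / ∑ k, ε ^ (M - u k))
      (nhdsWithin 0 (Set.Ioo (0:ℝ) 1))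
      (nhds (1 / ((Finset.univ.filter fun k => u k = M).card : ℝ))) :=
    tendsto_const_nhds.div hsumlim hne
  refine hdiv.congr' ?_
  filter_upwards [self_mem_nhdsWithin] with ε hε
  exact (key ε hε).symm
end

section
/- Let S be a finite nonempty set, u : S → ℝ, M = max_{k∈S} u(k), s₀ ∈ S, and r ∈ ℝ. For ε ∈ (0,1) define f(ε) = (ε^{−u(s₀)} / Σ_{k∈S} ε^{−u(k)}) / ε^{r} (real powers). Then f has a finite limit as ε → 0⁺ if and only if r ≤ M − u(s₀); moreover, if r > M − u(s₀) then f(ε) → +∞ as ε → 0⁺. -/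
open Filter Real Set

private lemma aux_denom (S : Type*) [Fintype S] [Nonempty S] (u : S → ℝ) :
    Tendsto (fun ε : ℝ => ∑ k, ε ^ (Finset.univ.sup' Finset.univ_nonempty u - u k))
      (nhdsWithin 0 (Set.Ioo (0 : ℝ) 1))
      (nhds (∑ k, (0:ℝ) ^ (Finset.univ.sup' Finset.univ_nonempty u - u k))) := by
  set M := Finset.univ.sup' Finset.univ_nonempty u
  apply tendsto_finset_sum
  intro k _
  have h : (0:ℝ) ≤ M - u k := by
    have := Finset.le_sup' u (Finset.mem_univ k); linarith
  exact ((Real.continuousAt_rpow_const 0 (M - u k) (Or.inr h)).tendsto).mono_left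
    nhdsWithin_le_nhds

/-- boundedness criterion: `(ε^{−u(s₀)}/∑_k ε^{−u(k)}) / ε^r` has a finite
limit as `ε → 0⁺` in `(0,1)` iff `r ≤ M − u(s₀)`; if `r > M − u(s₀)` it diverges to `+∞`. -/
theorem stmt12 (S : Type*) [Fintype S] [Nonempty S] (u : S → ℝ) (s₀ : S) (r : ℝ) :
    ((∃ L : ℝ, Filter.Tendsto
        (fun ε : ℝ => (ε ^ (-(u s₀)) / ∑ k, ε ^ (-(u k))) / ε ^ r)
        (nhdsWithin 0 (Set.Ioo (0 : ℝ) 1)) (nhds L)) ↔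
      r ≤ Finset.univ.sup' Finset.univ_nonempty u - u s₀) ∧
    (Finset.univ.sup' Finset.univ_nonempty u - u s₀ < r →
      Filter.Tendsto
        (fun ε : ℝ => (ε ^ (-(u s₀)) / ∑ k, ε ^ (-(u k))) / ε ^ r)
        (nhdsWithin 0 (Set.Ioo (0 : ℝ) 1)) Filter.atTop) := by
  set M := Finset.univ.sup' Finset.univ_nonempty u with hM
  set f : ℝ → ℝ := fun ε => (ε ^ (-(u s₀)) / ∑ k, ε ^ (-(u k))) / ε ^ r with hf
  set g : ℝ → ℝ := fun ε => ∑ k, ε ^ (M - u k) with hg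
  set c : ℝ := ∑ k, (0:ℝ) ^ (M - u k) with hc
  haveI hNB : (nhdsWithin (0:ℝ) (Set.Ioo 0 1)).NeBot := by
    rw [← mem_closure_iff_nhdsWithin_neBot, closure_Ioo (by norm_num : (0:ℝ) ≠ 1)]
    exact ⟨le_refl 0, by norm_num⟩
  -- positivity of c
  have hcpos : 0 < c := by
    obtain ⟨k₀, -, hk₀⟩ := Finset.exists_mem_eq_sup' Finset.univ_nonempty u
    have h1 : (0:ℝ) ^ (M - u k₀) = 1 := by rw [← hM] at hk₀; rw [hk₀, sub_self, Real.rpow_zero]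
    have : ∀ k ∈ Finset.univ (α := S), (0:ℝ) ≤ (0:ℝ) ^ (M - u k) := fun k _ =>
      Real.rpow_nonneg le_rfl _
    calc (0:ℝ) < (0:ℝ) ^ (M - u k₀) := by rw [h1]; norm_num
      _ ≤ c := Finset.single_le_sum this (Finset.mem_univ k₀)
  have hgc : Tendsto g (nhdsWithin 0 (Set.Ioo (0:ℝ) 1)) (nhds c) := aux_denom S u
  -- key rewriting on the set
  have hkey : ∀ ε ∈ Set.Ioo (0:ℝ) 1, f ε = ε ^ (M - u s₀ - r) / g ε := by
    intro ε hε
    have hε0 : (0:ℝ) < ε := hε.1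
    have hgε : g ε = ε ^ M * ∑ k, ε ^ (-(u k)) := by
      rw [hg, Finset.mul_sum]
      refine Finset.sum_congr rfl fun k _ => ?_
      rw [← Real.rpow_add hε0]; ring_nf
    have hnum : ε ^ (M - u s₀ - r) = ε ^ M * ε ^ (-(u s₀)) * (ε ^ r)⁻¹ := by
      rw [Real.rpow_sub hε0, Real.rpow_sub hε0, Real.rpow_neg hε0.le]
      ring
    have hsum : (0:ℝ) < ∑ k, ε ^ (-(u k)) :=
      Finset.sum_pos (fun k _ => Real.rpow_pos_of_pos hε0 _) Finset.univ_nonempty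
    have hεM : (0:ℝ) < ε ^ M := Real.rpow_pos_of_pos hε0 _
    have hεr : (0:ℝ) < ε ^ r := Real.rpow_pos_of_pos hε0 _
    rw [hf, hgε, hnum]
    field_simp
  have hkey' : f =ᶠ[nhdsWithin 0 (Set.Ioo (0:ℝ) 1)]
      fun ε => ε ^ (M - u s₀ - r) / g ε :=
    eventually_nhdsWithin_of_forall hkey
  -- divergence in the case a < 0
  have hdiv : M - u s₀ < r → Tendsto f (nhdsWithin 0 (Set.Ioo (0:ℝ) 1)) atTop := by
    intro hr
    rw [tendsto_congr' hkey']
    have ha : M - u s₀ - r < 0 := by linarith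
    have h1 : Tendsto (fun ε : ℝ => ε ^ (-(M - u s₀ - r)))
        (nhdsWithin 0 (Set.Ioo (0:ℝ) 1)) (nhdsWithin 0 (Set.Ioi 0)) := by
      apply tendsto_nhdsWithin_of_tendsto_nhds_of_eventually_within
      · have := (Real.continuousAt_rpow_const 0 (-(M - u s₀ - r)) (Or.inr (by linarith))).tendsto
        have h0 : (0:ℝ) ^ (-(M - u s₀ - r)) = 0 := Real.zero_rpow (by linarith)
        rw [h0] at this
        exact this.mono_left nhdsWithin_le_nhds
      · exact eventually_nhdsWithin_of_forall fun ε hε =>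
          Real.rpow_pos_of_pos hε.1 _
    have h2 : Tendsto (fun ε : ℝ => ε ^ (M - u s₀ - r))
        (nhdsWithin 0 (Set.Ioo (0:ℝ) 1)) atTop := by
      have := h1.inv_tendsto_nhdsGT_zero
      refine this.congr' (eventually_nhdsWithin_of_forall fun ε hε => ?_)
      show (ε ^ (-(M - u s₀ - r)))⁻¹ = ε ^ (M - u s₀ - r)
      rw [← Real.rpow_neg hε.1.le, neg_neg]
    have h3 : Tendsto (fun ε : ℝ => (g ε)⁻¹) (nhdsWithin 0 (Set.Ioo (0:ℝ) 1))
        (nhds c⁻¹) := hgc.inv₀ hcpos.ne'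
    have := Filter.Tendsto.pos_mul_atTop (inv_pos.mpr hcpos) h3 h2
    refine this.congr fun ε => ?_
    rw [div_eq_mul_inv]; ring
  constructor
  · constructor
    · rintro ⟨L, hL⟩
      by_contra hcon
      push_neg at hcon
      exact not_tendsto_nhds_of_tendsto_atTop (hdiv hcon) L hL
    · intro hr
      refine ⟨(0:ℝ) ^ (M - u s₀ - r) / c, ?_⟩
      rw [tendsto_congr' hkey']
      have ha : (0:ℝ) ≤ M - u s₀ - r := by linarith
      have hnum : Tendsto (fun ε : ℝ => ε ^ (M - u s₀ - r))
          (nhdsWithin 0 (Set.Ioo (0:ℝ) 1)) (nhds ((0:ℝ) ^ (M - u s₀ - r))) :=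
        ((Real.continuousAt_rpow_const 0 _ (Or.inr ha)).tendsto).mono_left
          nhdsWithin_le_nhds
      exact hnum.div hgc hcpos.ne'
  · exact hdiv
end
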